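/- With V, g, P, π, ω, Ric, Ric⁴ and r, r⁴ as in the pointwise model, the manifold is of Einstein type of the fourth kind if and only if it is quasi-Einstein with Ricci tensor Ric = (1/n)·(r − (n−1)·π(P))·g + (n−1)·(π⊗π); that is, Ric⁴ = (r⁴/n)·g holds if and only if Ric = (1/n)·(r − (n−1)·π(P))·g + (n−1)·(π⊗π). -/

import Mathlib

/-!
Tracing the definition of `Ric⁴` with `tr_g g = n` and `tr_g (π ⊗ π) = g(P, P) = π(P)` gives
`r⁴ / n = (r - (n - 1) π(P)) / n - (n - 1) ω`. Substituting this into `Ric⁴ = (r⁴ / n) g`,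
the two `(n - 1) ω g` terms cancel and what remains is the quasi-Einstein form of `Ric`.
-/

/-- The `g`-trace of a bilinear form `B`: the trace of the endomorphism
`(g♭)⁻¹ ∘ B♭` of `V`, where `B♭ : V → V*` is `X ↦ B(X,·)`. -/
noncomputable def trG {V : Type*} [AddCommGroup V] [Module ℝ V] [FiniteDimensional ℝ V]
    (g : LinearMap.BilinForm ℝ V) (hg : g.Nondegenerate)
    (B : LinearMap.BilinForm ℝ V) : ℝ :=
  LinearMap.trace ℝ V ((g.toDual hg).symm.toLinearMap ∘ₗ B)

section

variable {V : Type*} [AddCommGroup V] [Module ℝ V] [FiniteDimensional ℝ V]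
  (g : LinearMap.BilinForm ℝ V) (hg : g.Nondegenerate)

theorem trG_sub (B C : LinearMap.BilinForm ℝ V) :
    trG g hg (B - C) = trG g hg B - trG g hg C := by
  simp only [trG, LinearMap.comp_sub, map_sub]

theorem trG_smul (c : ℝ) (B : LinearMap.BilinForm ℝ V) :
    trG g hg (c • B) = c * trG g hg B := by
  simp only [trG, LinearMap.comp_smul, map_smul, smul_eq_mul]

theorem trG_self : trG g hg g = Module.finrank ℝ V := by
  rw [trG, show (g.toDual hg).symm.toLinearMap ∘ₗ g = LinearMap.id from (g.toDual hg).symm_comp,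
    LinearMap.trace_id]

theorem trG_smulRight (φ ψ : Module.Dual ℝ V) :
    trG g hg (φ.smulRight ψ) = φ ((g.toDual hg).symm ψ) := by
  have hcomp : (g.toDual hg).symm.toLinearMap ∘ₗ φ.smulRight ψ
      = φ.smulRight ((g.toDual hg).symm ψ) := by
    ext x
    simp
  rw [trG, hcomp, LinearMap.trace_smulRight]

theorem LinearMap.BilinForm.toDual_symm_flip (hgs : g.IsSymm) (P : V) :
    (g.toDual hg).symm (g.flip P) = P := by
  rw [LinearEquiv.symm_apply_eq]
  ext y
  exact LinearMap.BilinForm.isSymm_def.mp hgs y P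

end

theorem sub_smul_sub_smul_eq_iff {k M : Type*} [Ring k] [AddCommGroup M] [Module k M]
    (R g p : M) (a b A : k) :
    R - a • g - b • p = (A - a) • g ↔ R = A • g + b • p := by
  rw [← sub_eq_zero, ← sub_eq_zero (a := R),
    show R - a • g - b • p - (A - a) • g = R - (A • g + b • p) by rw [sub_smul]; abel]

theorem stmt_5_general {V : Type*} [AddCommGroup V] [Module ℝ V] [FiniteDimensional ℝ V]
    (n : ℕ) (hn : 3 ≤ n) (hdim : Module.finrank ℝ V = n)
    (g : LinearMap.BilinForm ℝ V) (hg : g.Nondegenerate) (hgs : g.IsSymm)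
    (P : V) (π : V →ₗ[ℝ] ℝ) (hπ : π = g.flip P) (ω : ℝ)
    (ππ : LinearMap.BilinForm ℝ V) (hππ : ππ = π.smulRight π)
    (Ric : LinearMap.BilinForm ℝ V)
    (Ric4 : LinearMap.BilinForm ℝ V)
    (hRic4 : Ric4 = Ric - (((n : ℝ) - 1) * ω) • g - ((n : ℝ) - 1) • ππ) :
    Ric4 = (trG g hg Ric4 / (n : ℝ)) • g ↔
      Ric = ((1 / (n : ℝ)) * (trG g hg Ric - ((n : ℝ) - 1) * π P)) • g
        + ((n : ℝ) - 1) • ππ := by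
  have htrππ : trG g hg ππ = π P := by
    rw [hππ, trG_smulRight, hπ, g.toDual_symm_flip hg hgs]
  have htrRic4 :
      trG g hg Ric4 = trG g hg Ric - ((n : ℝ) - 1) * ω * n - ((n : ℝ) - 1) * π P := by
    rw [hRic4, trG_sub, trG_sub, trG_smul, trG_smul, trG_self, hdim, htrππ]
  have hn0 : (n : ℝ) ≠ 0 := by positivity
  have hcoeff : trG g hg Ric4 / n
      = (1 / (n : ℝ)) * (trG g hg Ric - ((n : ℝ) - 1) * π P) - ((n : ℝ) - 1) * ω := by
    rw [htrRic4]; field_simp; ring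
  rw [hcoeff, hRic4]
  exact sub_smul_sub_smul_eq_iff Ric g ππ _ _ _

theorem stmt_5 {V : Type*} [AddCommGroup V] [Module ℝ V] [FiniteDimensional ℝ V]
    (n : ℕ) (hn : 3 ≤ n) (hdim : Module.finrank ℝ V = n)
    (g : LinearMap.BilinForm ℝ V) (hg : g.Nondegenerate) (hgs : g.IsSymm)
    (P : V) (π : V →ₗ[ℝ] ℝ) (hπ : π = g.flip P) (ω : ℝ)
    (ππ : LinearMap.BilinForm ℝ V) (hππ : ππ = π.smulRight π)
    (Ric : LinearMap.BilinForm ℝ V) (hRicSymm : Ric.IsSymm)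
    (Ric4 : LinearMap.BilinForm ℝ V)
    (hRic4 : Ric4 = Ric - (((n : ℝ) - 1) * ω) • g - ((n : ℝ) - 1) • ππ) :
    Ric4 = (trG g hg Ric4 / (n : ℝ)) • g ↔
      Ric = ((1 / (n : ℝ)) * (trG g hg Ric - ((n : ℝ) - 1) * π P)) • g
        + ((n : ℝ) - 1) • ππ :=
  stmt_5_general n hn hdim g hg hgs P π hπ ω ππ hππ Ric Ric4 hRic4
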